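/- arXiv:1608.01588 — 3 statements merged into one kernel-verified Lean document; each statement's English description precedes it below -/
import Mathlib

section
/- Let N_t ≥ 1 be an integer, let D be a 2N_t × 2N_t real diagonal matrix with positive diagonal entries, and let a ∈ ℤ^{2N_t} be a fixed integer vector. Let V_c be a random N_t × N_t unitary matrix distributed according to the Haar probability measure on the unitary group U(N_t), and let V = [[Re V_c, −Im V_c],[Im V_c, Re V_c]] be the induced 2N_t × 2N_t real orthogonal matrix. Let O be a random 2N_t × 2N_t real orthogonal matrix distributed according to the Haar probability measure on the orthogonal group O(2N_t). Then the random variables ‖D^{1/2} V a‖ and ‖D^{1/2} O a‖ are equal in distribution, i.e., the pushforward of the Haar measure on U(N_t) under V_c ↦ ‖D^{1/2} V a‖ equals the pushforward of the Haar measure on O(2N_t) under O ↦ ‖D^{1/2} O a‖. -/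
open MeasureTheory Matrix

/-- The product measurable-space structure on matrices. -/
instance matrixMeasurableSpace {m n α : Type*} [MeasurableSpace α] :
    MeasurableSpace (Matrix m n α) :=
  inferInstanceAs (MeasurableSpace (m → n → α))

noncomputable section

/-- The Euclidean norm of a real vector. -/
def euclNorm {ι : Type*} [Fintype ι] (x : ι → ℝ) : ℝ :=
  Real.sqrt (∑ i, x i ^ 2)

/-- The Euclidean norm of an integer vector. -/
def intNorm {ι : Type*} [Fintype ι] (a : ι → ℤ) : ℝ :=
  euclNorm (fun i => (a i : ℝ))

/-- The real representation `[[Re M, -Im M],[Im M, Re M]]` of a complex matrix. -/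
def realRep {n : ℕ} (M : Matrix (Fin n) (Fin n) ℂ) :
    Matrix (Fin n ⊕ Fin n) (Fin n ⊕ Fin n) ℝ :=
  Matrix.fromBlocks (M.map Complex.re) (-(M.map Complex.im))
    (M.map Complex.im) (M.map Complex.re)

/-- The set of points of the lattice generated by the columns of `G`. -/
def latticePts {ι : Type*} [Fintype ι] (G : Matrix ι ι ℝ) : Set (ι → ℝ) :=
  {x | ∃ a : ι → ℤ, x = G *ᵥ fun i => (a i : ℝ)}

/-- The `k`-th successive minimum of the lattice generated by the columns of `G`:
the infimum of the radii `r > 0` such that the lattice points of norm at most `r`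
span a subspace of dimension at least `k`. -/
def succMin {ι : Type*} [Fintype ι] (G : Matrix ι ι ℝ) (k : ℕ) : ℝ :=
  sInf {r : ℝ | 0 < r ∧
    k ≤ Module.finrank ℝ (Submodule.span ℝ {x | x ∈ latticePts G ∧ euclNorm x ≤ r})}

/-- The achievable rate of integer forcing,
`R_IF(D,V) = N_t · log₂ (1/λ_{2N_t}(Λ)²)`, where `Λ` is the lattice generated by
the columns of `D^{-1/2} Vᵀ` and `D = diag d`. -/
def RIF (Nt : ℕ) (d : Fin Nt ⊕ Fin Nt → ℝ)
    (V : Matrix (Fin Nt ⊕ Fin Nt) (Fin Nt ⊕ Fin Nt) ℝ) : ℝ :=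
  Nt * Real.logb 2
    (1 / (succMin (Matrix.diagonal (fun i => (Real.sqrt (d i))⁻¹) * Vᵀ) (2 * Nt)) ^ 2)

/-- `α_{N_t} = ((2N_t+3)/4)·((2/π)·Γ(2+N_t)^{1/N_t})²`. -/
def alphaNt (Nt : ℕ) : ℝ :=
  ((2 * Nt + 3) / 4) * ((2 / Real.pi) * (Real.Gamma (2 + Nt)) ^ ((1 : ℝ) / Nt)) ^ 2

/-- `A(β,d;ι) = {a ∈ ℤ^ι : 0 < ‖a‖ < √(β/d)}`. -/
def Aset (ι : Type*) [Fintype ι] (β dm : ℝ) : Set (ι → ℤ) :=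
  {a | 0 < intNorm a ∧ intNorm a < Real.sqrt (β / dm)}

/-! Couple the two models: for independent Haar-distributed `O ∈ O(2N)` and `U ∈ U(N)` consider
the vector `realRep U · O a`. Given `U`, left invariance of the Haar measure on `O(2N)` makes it
distributed as `O a`. Given `O`, the orthogonal matrices `realRep U(N)` act transitively on every
sphere of `ℝ^{2N} ≅ ℂ^N`, so `O a = realRep U₀ a` for some `U₀`, and right invariance of the Haar
measure on `U(N)` makes it distributed as `realRep V a`. Hence `realRep V a` and `O a` have the same
law, and so do their images under `y ↦ ‖D^{1/2} y‖`. -/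

theorem MeasureTheory.Measure.map_prod_eq_of_forall_map_eq {α β γ : Type*} [MeasurableSpace α]
    [MeasurableSpace β] [MeasurableSpace γ] {μ : Measure α} {ν : Measure β}
    [IsProbabilityMeasure μ] [SFinite ν]
    {F : α × β → γ} (hF : Measurable F) {κ : Measure γ}
    (h : ∀ x, ν.map (fun y => F (x, y)) = κ) :
    (μ.prod ν).map F = κ := by
  ext s hs
  have slice (x : α) : ν (Prod.mk x ⁻¹' (F ⁻¹' s)) = κ s := by
    rw [← h x, Measure.map_apply (by fun_prop) hs]
    rfl
  simp [Measure.map_apply hF hs, Measure.prod_apply (hF hs), slice]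

theorem MeasureTheory.Measure.map_eq_map_comp_of_forall_exists {G H X : Type*} [Group G] [Group H]
    [MeasurableSpace G] [MeasurableSpace H] [MeasurableSpace X] [MeasurableMul₂ G] [MeasurableMul H]
    (μ : Measure G) [IsProbabilityMeasure μ] [μ.IsMulLeftInvariant]
    (ν : Measure H) [IsProbabilityMeasure ν] [ν.IsMulRightInvariant]
    {φ : H →* G} (hφ : Measurable φ) {f : G → X} (hf : Measurable f)
    (hfφ : ∀ g, ∃ h₀, ∀ k, f (k * g) = f (k * φ h₀)) :
    μ.map f = ν.map (f ∘ φ) := by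
  set F : H × G → X := fun p => f (φ p.1 * p.2)
  have hF : Measurable F := hf.comp ((hφ.comp measurable_fst).mul measurable_snd)
  calc μ.map f = (ν.prod μ).map F := by
        refine (Measure.map_prod_eq_of_forall_map_eq hF fun h => ?_).symm
        change μ.map (f ∘ (φ h * ·)) = _
        rw [← Measure.map_map hf (measurable_const_mul _), map_mul_left_eq_self]
    _ = (μ.prod ν).map (F ∘ Prod.swap) := by
        rw [← Measure.prod_swap, Measure.map_map hF measurable_swap]
    _ = ν.map (f ∘ φ) := by
        refine Measure.map_prod_eq_of_forall_map_eq (hF.comp measurable_swap) fun g => ?_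
        obtain ⟨h₀, hh₀⟩ := hfφ g
        have : (fun h => (F ∘ Prod.swap) (g, h)) = (f ∘ φ) ∘ (· * h₀) := by
          funext h
          simp [F, hh₀]
        rw [this, ← Measure.map_map (hf.comp hφ) (measurable_mul_const _), map_mul_right_eq_self]

theorem Matrix.measurable_entry {m n α : Type*} [MeasurableSpace α] (i : m) (j : n) :
    Measurable fun M : Matrix m n α => M i j :=
  (measurable_pi_apply j).comp (measurable_pi_apply i)

instance Matrix.instMeasurableMul₂ {ι α : Type*} [Fintype ι] [MeasurableSpace α]
    [NonUnitalNonAssocSemiring α] [MeasurableMul₂ α] [MeasurableAdd₂ α] :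
    MeasurableMul₂ (Matrix ι ι α) where
  measurable_mul := by
    refine measurable_pi_lambda _ fun i => measurable_pi_lambda _ fun j => ?_
    simp only [Matrix.mul_apply]
    exact Finset.measurable_sum _ fun k _ =>
      ((Matrix.measurable_entry i k).comp measurable_fst).mul
        ((Matrix.measurable_entry k j).comp measurable_snd)

instance Submonoid.instMeasurableMul₂ {M : Type*} [Monoid M] [MeasurableSpace M]
    [MeasurableMul₂ M] (S : Submonoid M) : MeasurableMul₂ S where
  measurable_mul :=
    ((measurable_subtype_coe.comp measurable_fst).mul
      (measurable_subtype_coe.comp measurable_snd)).subtype_mk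

theorem Matrix.measurable_mulVec_const {ι α : Type*} [Fintype ι] [MeasurableSpace α]
    [NonUnitalNonAssocSemiring α] [MeasurableMul α] [MeasurableAdd₂ α] (v : ι → α) :
    Measurable fun M : Matrix ι ι α => M *ᵥ v :=
  measurable_pi_lambda _ fun i => Finset.measurable_sum _ fun j _ =>
    (Matrix.measurable_entry i j).mul_const (v j)

theorem exists_linearIsometryEquiv_apply_eq {𝕜 E : Type*} [RCLike 𝕜] [NormedAddCommGroup E]
    [InnerProductSpace 𝕜 E] [FiniteDimensional 𝕜 E] {v w : E} (h : ‖v‖ = ‖w‖) :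
    ∃ f : E ≃ₗᵢ[𝕜] E, f v = w := by
  rcases eq_or_ne v 0 with rfl | hv
  · exact ⟨.refl 𝕜 E, (norm_eq_zero.1 (h.symm.trans norm_zero)).symm⟩
  have hw : w ≠ 0 := norm_ne_zero_iff.1 (h ▸ norm_ne_zero_iff.2 hv)
  let i₀ : Fin (Module.finrank 𝕜 E) := ⟨0, Module.finrank_pos_iff_exists_ne_zero.2 ⟨v, hv⟩⟩
  have normalize : ∀ u : E, u ≠ 0 →
      ∃ b : OrthonormalBasis (Fin (Module.finrank 𝕜 E)) 𝕜 E, b i₀ = (‖u‖⁻¹ : 𝕜) • u := by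
    intro u hu
    obtain ⟨b, hb⟩ := Orthonormal.exists_orthonormalBasis_extension_of_card_eq
      (Fintype.card_fin _).symm (v := fun _ => (‖u‖⁻¹ : 𝕜) • u) (s := {i₀})
      (orthonormal_subsingleton_iff.2 fun _ => by simp [norm_smul, hu])
    exact ⟨b, hb i₀ rfl⟩
  obtain ⟨b, hb⟩ := normalize v hv
  obtain ⟨c, hc⟩ := normalize w hw
  refine ⟨b.equiv c (.refl _), ?_⟩
  have := b.equiv_apply_basis c (.refl _) i₀
  rw [hb, Equiv.refl_apply, hc, map_smul, h] at this
  exact smul_right_injective E (by simpa using hw) this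

theorem exists_mem_unitaryGroup_mulVec_eq {𝕜 ι : Type*} [RCLike 𝕜] [Fintype ι] [DecidableEq ι]
    {x y : ι → 𝕜} (h : ‖WithLp.toLp 2 x‖ = ‖WithLp.toLp 2 y‖) :
    ∃ U ∈ Matrix.unitaryGroup ι 𝕜, U *ᵥ x = y := by
  obtain ⟨f, hf⟩ := exists_linearIsometryEquiv_apply_eq (𝕜 := 𝕜) h
  let b := EuclideanSpace.basisFun ι 𝕜
  refine ⟨LinearMap.toMatrix b.toBasis b.toBasis f, f.toMatrix_mem_unitaryGroup b b, ?_⟩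
  exact (LinearMap.toMatrix_mulVec_repr b.toBasis b.toBasis f.toLinearMap _).trans
    (congrArg (fun v => ⇑(b.toBasis.repr v)) hf)

theorem euclNorm_eq_sqrt_dotProduct {ι : Type*} [Fintype ι] (x : ι → ℝ) :
    euclNorm x = √(x ⬝ᵥ x) := by
  simp [euclNorm, dotProduct, sq]

theorem euclNorm_mulVec_of_mem_orthogonalGroup {ι : Type*} [Fintype ι] [DecidableEq ι]
    {O : Matrix ι ι ℝ} (hO : O ∈ Matrix.orthogonalGroup ι ℝ) (x : ι → ℝ) :
    euclNorm (O *ᵥ x) = euclNorm x := by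
  have hOO : Oᵀ * O = 1 := Matrix.mem_unitaryGroup_iff'.1 hO
  rw [euclNorm_eq_sqrt_dotProduct, euclNorm_eq_sqrt_dotProduct, Matrix.dotProduct_mulVec,
    ← Matrix.mulVec_transpose, Matrix.mulVec_mulVec, hOO, Matrix.one_mulVec]

theorem measurable_euclNorm_scale {ι : Type*} [Fintype ι] (c : ι → ℝ) :
    Measurable fun y : ι → ℝ => euclNorm fun i => c i * y i := by
  unfold euclNorm
  fun_prop

theorem realRep_one {n : ℕ} : realRep (1 : Matrix (Fin n) (Fin n) ℂ) = 1 := by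
  ext (i | i) (j | j) <;> simp [realRep, Matrix.one_apply, apply_ite]

theorem realRep_mul {n : ℕ} (M N : Matrix (Fin n) (Fin n) ℂ) :
    realRep (M * N) = realRep M * realRep N := by
  ext (i | i) (j | j) <;>
    simp [realRep, Matrix.mul_apply, Complex.mul_re, Complex.mul_im,
      Finset.sum_add_distrib, Finset.sum_sub_distrib] <;> ring

theorem realRep_conjTranspose {n : ℕ} (M : Matrix (Fin n) (Fin n) ℂ) :
    realRep Mᴴ = (realRep M)ᴴ := by
  ext (i | i) (j | j) <;> simp [realRep, Matrix.conjTranspose_apply]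

def realRepStarMonoidHom (n : ℕ) :
    Matrix (Fin n) (Fin n) ℂ →⋆* Matrix (Fin n ⊕ Fin n) (Fin n ⊕ Fin n) ℝ where
  toFun := realRep
  map_one' := realRep_one
  map_mul' := realRep_mul
  map_star' := realRep_conjTranspose

def realRepUnitary (n : ℕ) :
    Matrix.unitaryGroup (Fin n) ℂ →* Matrix.orthogonalGroup (Fin n ⊕ Fin n) ℝ :=
  Unitary.map (realRepStarMonoidHom n)

theorem measurable_realRep {n : ℕ} : Measurable (realRep (n := n)) := by
  refine measurable_pi_lambda _ fun i => measurable_pi_lambda _ fun j => ?_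
  rcases i with i | i <;> rcases j with j | j <;> simp only [realRep, Matrix.fromBlocks_apply₁₁,
    Matrix.fromBlocks_apply₁₂, Matrix.fromBlocks_apply₂₁, Matrix.fromBlocks_apply₂₂,
    Matrix.neg_apply, Matrix.map_apply]
  · exact Complex.measurable_re.comp (Matrix.measurable_entry i j)
  · exact (Complex.measurable_im.comp (Matrix.measurable_entry i j)).neg
  · exact Complex.measurable_im.comp (Matrix.measurable_entry i j)
  · exact Complex.measurable_re.comp (Matrix.measurable_entry i j)

theorem measurable_realRepUnitary (n : ℕ) : Measurable (realRepUnitary n) :=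
  (measurable_realRep.comp measurable_subtype_coe).subtype_mk

def toComplexVec {n : ℕ} (x : Fin n ⊕ Fin n → ℝ) : Fin n → ℂ :=
  fun j => ⟨x (.inl j), x (.inr j)⟩

def ofComplexVec {n : ℕ} (z : Fin n → ℂ) : Fin n ⊕ Fin n → ℝ :=
  Sum.elim (fun j => (z j).re) (fun j => (z j).im)

theorem ofComplexVec_toComplexVec {n : ℕ} (x : Fin n ⊕ Fin n → ℝ) :
    ofComplexVec (toComplexVec x) = x := by
  ext (j | j) <;> rfl

theorem realRep_mulVec {n : ℕ} (M : Matrix (Fin n) (Fin n) ℂ) (x : Fin n ⊕ Fin n → ℝ) :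
    realRep M *ᵥ x = ofComplexVec (M *ᵥ toComplexVec x) := by
  ext (i | i) <;>
    simp [realRep, ofComplexVec, toComplexVec, Matrix.mulVec, dotProduct, Fintype.sum_sum_type,
      Complex.mul_re, Complex.mul_im, Finset.sum_add_distrib, Finset.sum_sub_distrib] <;> ring

theorem norm_toLp_toComplexVec {n : ℕ} (x : Fin n ⊕ Fin n → ℝ) :
    ‖WithLp.toLp 2 (toComplexVec x)‖ = euclNorm x := by
  rw [EuclideanSpace.norm_eq, euclNorm, Fintype.sum_sum_type, ← Finset.sum_add_distrib]
  congr 1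
  refine Finset.sum_congr rfl fun j _ => ?_
  rw [Complex.sq_norm]
  simp [toComplexVec, Complex.normSq_mk, sq]

theorem exists_mem_unitaryGroup_realRep_mulVec_eq {n : ℕ} {x y : Fin n ⊕ Fin n → ℝ}
    (h : euclNorm x = euclNorm y) :
    ∃ U ∈ Matrix.unitaryGroup (Fin n) ℂ, realRep U *ᵥ x = y := by
  obtain ⟨U, hU, hUxy⟩ := exists_mem_unitaryGroup_mulVec_eq (x := toComplexVec x)
    (y := toComplexVec y) (by rw [norm_toLp_toComplexVec, norm_toLp_toComplexVec, h])
  exact ⟨U, hU, by rw [realRep_mulVec, hUxy, ofComplexVec_toComplexVec]⟩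

theorem exists_realRepUnitary_mulVec_eq {n : ℕ} (O : Matrix.orthogonalGroup (Fin n ⊕ Fin n) ℝ)
    (x : Fin n ⊕ Fin n → ℝ) :
    ∃ U, (realRepUnitary n U : Matrix (Fin n ⊕ Fin n) (Fin n ⊕ Fin n) ℝ) *ᵥ x =
      (O : Matrix (Fin n ⊕ Fin n) (Fin n ⊕ Fin n) ℝ) *ᵥ x := by
  obtain ⟨U, hU, hUx⟩ := exists_mem_unitaryGroup_realRep_mulVec_eq
    (euclNorm_mulVec_of_mem_orthogonalGroup O.2 x).symm
  exact ⟨⟨U, hU⟩, hUx⟩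

theorem statement_0_general (Nt : ℕ)
    (d : Fin Nt ⊕ Fin Nt → ℝ)
    (a : Fin Nt ⊕ Fin Nt → ℤ)
    (μU : Measure (Matrix.unitaryGroup (Fin Nt) ℂ)) [IsProbabilityMeasure μU]
    [μU.IsMulRightInvariant]
    (μO : Measure (Matrix.orthogonalGroup (Fin Nt ⊕ Fin Nt) ℝ)) [IsProbabilityMeasure μO]
    [μO.IsMulLeftInvariant] :
    Measure.map
      (fun Vc : Matrix.unitaryGroup (Fin Nt) ℂ =>
        euclNorm (fun i => Real.sqrt (d i) *
          ((realRep (Vc : Matrix (Fin Nt) (Fin Nt) ℂ)) *ᵥ fun j => ((a j : ℝ))) i)) μU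
    = Measure.map
      (fun O : Matrix.orthogonalGroup (Fin Nt ⊕ Fin Nt) ℝ =>
        euclNorm (fun i => Real.sqrt (d i) *
          ((O : Matrix (Fin Nt ⊕ Fin Nt) (Fin Nt ⊕ Fin Nt) ℝ) *ᵥ fun j => ((a j : ℝ))) i)) μO := by
  set x : Fin Nt ⊕ Fin Nt → ℝ := fun j => (a j : ℝ)
  set f : Matrix.orthogonalGroup (Fin Nt ⊕ Fin Nt) ℝ → (Fin Nt ⊕ Fin Nt → ℝ) :=
    fun O => (O : Matrix (Fin Nt ⊕ Fin Nt) (Fin Nt ⊕ Fin Nt) ℝ) *ᵥ x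
  have hf : Measurable f := (Matrix.measurable_mulVec_const x).comp measurable_subtype_coe
  have hφ := measurable_realRepUnitary Nt
  have same_law : μO.map f = μU.map (f ∘ realRepUnitary Nt) := by
    refine Measure.map_eq_map_comp_of_forall_exists μO μU hφ hf fun O => ?_
    obtain ⟨U, hU⟩ := exists_realRepUnitary_mulVec_eq O x
    exact ⟨U, fun k => by simp only [f, Submonoid.coe_mul, ← Matrix.mulVec_mulVec, hU]⟩
  have hg := measurable_euclNorm_scale fun i => √(d i)
  calc _ = (μU.map (f ∘ realRepUnitary Nt)).map _ := (Measure.map_map hg (hf.comp hφ)).symm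
    _ = (μO.map f).map _ := by rw [same_law]
    _ = _ := Measure.map_map hg hf

/-- Lemma 1: for fixed positive diagonal `D` and a fixed integer
vector `a`, with `V_c` Haar-distributed on `U(N_t)` (inducing the real orthogonal
matrix `V`) and `O` Haar-distributed on `O(2N_t)`, the random variables
`‖D^{1/2} V a‖` and `‖D^{1/2} O a‖` are equal in distribution. -/
theorem statement_0 (Nt : ℕ) (hNt : 1 ≤ Nt)
    (d : Fin Nt ⊕ Fin Nt → ℝ) (hd : ∀ i, 0 < d i)
    (a : Fin Nt ⊕ Fin Nt → ℤ)
    (μU : Measure (Matrix.unitaryGroup (Fin Nt) ℂ)) [IsProbabilityMeasure μU]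
    [μU.IsMulLeftInvariant] [μU.IsMulRightInvariant]
    (μO : Measure (Matrix.orthogonalGroup (Fin Nt ⊕ Fin Nt) ℝ)) [IsProbabilityMeasure μO]
    [μO.IsMulLeftInvariant] [μO.IsMulRightInvariant] :
    Measure.map
      (fun Vc : Matrix.unitaryGroup (Fin Nt) ℂ =>
        euclNorm (fun i => Real.sqrt (d i) *
          ((realRep (Vc : Matrix (Fin Nt) (Fin Nt) ℂ)) *ᵥ fun j => ((a j : ℝ))) i)) μU
    = Measure.map
      (fun O : Matrix.orthogonalGroup (Fin Nt ⊕ Fin Nt) ℝ =>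
        euclNorm (fun i => Real.sqrt (d i) *
          ((O : Matrix (Fin Nt ⊕ Fin Nt) (Fin Nt ⊕ Fin Nt) ℝ) *ᵥ fun j => ((a j : ℝ))) i)) μO :=
  statement_0_general Nt d a μU μO

end
end

section
/- Let N ≥ 1 be an integer and let d_1,…,d_{2N} be positive reals appearing in equal pairs (each value occurring an even number of times), with d_min = min_i d_i. Let D = diag(d_1,…,d_{2N}), let r > 0, and let o be a random vector uniformly distributed on the sphere {x ∈ ℝ^{2N} : ‖x‖ = r}. Then for every β > 0, P(‖D^{1/2} o‖ < √β) ≤ [2N · β^{N − 1/2}] / [r^{2N−1} · (∏_{i=1}^{2N} √d_i) · (2/√d_min)]. -/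
open MeasureTheory Matrix

noncomputable section

/-!
Averaging over the Haar measure of the compact group `O(n)` (Fubini) shows that a
rotation-invariant probability measure `μ` on the sphere of radius `r` is unique:
`μ S · vol(B_r) = vol(cone over S)`. If `S` lies in an ellipsoid with semi-axes `bᵢ`, then so
does its cone, hence `μ S ≤ ∏ bᵢ / rⁿ`. On the sphere, the event `∑ dᵢ xᵢ² < β` lies in every
ellipsoid `∑ (u + v dᵢ) xᵢ² ≤ c` with `u r² + v β ≤ c`. For `β ≤ N² d_min r²` take
`(u, v, c) = (0, 1, β)`; otherwise take `(β, (N - 1) r², N r² β)`. The remaining inequality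
holds because `(1 + 1/(N-1))^(N-1) ≤ N`. Since the `dᵢ` come in pairs, `∏ √dᵢ` is a
product without square roots.
-/

open Set

section EuclNorm

variable {ι : Type*} [Fintype ι]

lemma euclNorm_eq_norm_toLp (x : ι → ℝ) : euclNorm x = ‖WithLp.toLp 2 x‖ := by
  rw [euclNorm, EuclideanSpace.norm_eq]
  simp only [Real.norm_eq_abs, sq_abs]

lemma continuous_euclNorm : Continuous (euclNorm : (ι → ℝ) → ℝ) := by
  rw [show (euclNorm : (ι → ℝ) → ℝ) = fun x => ‖WithLp.toLp 2 x‖ from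
    funext euclNorm_eq_norm_toLp]
  exact (PiLp.continuous_toLp 2 _).norm

lemma euclNorm_eq_iff {x : ι → ℝ} {t : ℝ} (ht : 0 ≤ t) :
    euclNorm x = t ↔ ∑ i, x i ^ 2 = t ^ 2 :=
  Real.sqrt_eq_iff_eq_sq (by positivity) ht

lemma euclNorm_pos_iff {x : ι → ℝ} : 0 < euclNorm x ↔ x ≠ 0 := by
  simp [euclNorm_eq_norm_toLp]

lemma euclNorm_smul (c : ℝ) (x : ι → ℝ) : euclNorm (c • x) = |c| * euclNorm x := by
  simp [euclNorm_eq_norm_toLp, norm_smul]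

lemma euclNorm_sqrt_mul_lt_sqrt_iff {d : ι → ℝ} (hd : ∀ i, 0 ≤ d i) (x : ι → ℝ) {β : ℝ} :
    euclNorm (fun i => √(d i) * x i) < √β ↔ ∑ i, d i * x i ^ 2 < β := by
  simp only [euclNorm, mul_pow, Real.sq_sqrt (hd _)]
  exact Real.sqrt_lt_sqrt_iff (Finset.sum_nonneg fun i _ => mul_nonneg (hd i) (sq_nonneg _))

end EuclNorm

section OrthogonalGroup

variable {ι : Type*} [Fintype ι] [DecidableEq ι]

instance : MulAction (Matrix.orthogonalGroup ι ℝ) (ι → ℝ) where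
  smul O x := (O : Matrix ι ι ℝ) *ᵥ x
  one_smul := Matrix.one_mulVec
  mul_smul O U x := (Matrix.mulVec_mulVec x (O : Matrix ι ι ℝ) U).symm

lemma Matrix.orthogonalGroup.smul_def (O : Matrix.orthogonalGroup ι ℝ) (x : ι → ℝ) :
    O • x = (O : Matrix ι ι ℝ) *ᵥ x := rfl

lemma euclNorm_orthogonalGroup_smul (O : Matrix.orthogonalGroup ι ℝ) (x : ι → ℝ) :
    euclNorm (O • x) = euclNorm x := by
  have hO : (O : Matrix ι ι ℝ)ᵀ * O = 1 := (Matrix.mem_orthogonalGroup_iff' ι ℝ).mp O.2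
  have h : (O • x) ⬝ᵥ (O • x) = x ⬝ᵥ x := by
    rw [Matrix.orthogonalGroup.smul_def, Matrix.dotProduct_mulVec, ← Matrix.mulVec_transpose,
      Matrix.mulVec_mulVec, hO, Matrix.one_mulVec]
  simpa [euclNorm, dotProduct, sq] using congrArg Real.sqrt h

/-- The matrix of the reflection in the hyperplane orthogonal to `y - x` does it. -/
lemma exists_orthogonalGroup_smul_eq {x y : ι → ℝ} (h : euclNorm y = euclNorm x) :
    ∃ O : Matrix.orthogonalGroup ι ℝ, O • y = x := by
  let b := (EuclideanSpace.basisFun ι ℝ).toBasis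
  let f := Submodule.reflection (ℝ ∙ (WithLp.toLp 2 y - WithLp.toLp 2 x))ᗮ
  refine ⟨⟨LinearMap.toMatrix b b f.toLinearEquiv,
    f.toMatrix_mem_unitaryGroup (EuclideanSpace.basisFun ι ℝ) (EuclideanSpace.basisFun ι ℝ)⟩, ?_⟩
  have hf : f (WithLp.toLp 2 y) = WithLp.toLp 2 x := by
    apply Submodule.reflection_sub
    simpa [euclNorm_eq_norm_toLp] using h
  have key := LinearMap.toMatrix_mulVec_repr b b f.toLinearEquiv (WithLp.toLp 2 y)
  rw [LinearEquiv.coe_coe, LinearIsometryEquiv.coe_toLinearEquiv, hf] at key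
  exact key

end OrthogonalGroup

section GroupAction

variable {G α : Type*} [Group G] [MulAction G α] [MeasurableSpace G]

lemma lintegral_measure_inv_smul_mem [MeasurableSpace α] [MeasurableInv G] [MeasurableSMul₂ G α]
    (ρ : Measure G) [SFinite ρ] (ν : Measure α) [SFinite ν] [SMulInvariantMeasure G α ν]
    {A : Set α} (hA : MeasurableSet A) :
    ∫⁻ x, ρ {g | g⁻¹ • x ∈ A} ∂ν = ρ univ * ν A := by
  have hmeas : MeasurableSet {p : G × α | p.1⁻¹ • p.2 ∈ A} :=
    (measurable_fst.inv.smul measurable_snd) hA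
  calc ∫⁻ x, ρ {g | g⁻¹ • x ∈ A} ∂ν = (ρ.prod ν) {p : G × α | p.1⁻¹ • p.2 ∈ A} :=
        (Measure.prod_apply_symm hmeas).symm
    _ = ∫⁻ g, ν ((g⁻¹ • ·) ⁻¹' A) ∂ρ := Measure.prod_apply hmeas
    _ = ρ univ * ν A := by simp [mul_comm]

lemma measure_inv_smul_mem_smul [MeasurableMul G] (ρ : Measure G) [ρ.IsMulLeftInvariant]
    (A : Set α) (u : G) (x : α) :
    ρ {g | g⁻¹ • u • x ∈ A} = ρ {g | g⁻¹ • x ∈ A} := by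
  rw [← measure_preimage_mul ρ u⁻¹ {g | g⁻¹ • x ∈ A}]
  congr 1
  ext g
  simp [mul_smul]

end GroupAction

section OrthogonalGroupMeasure

variable (ι : Type*) [Fintype ι] [DecidableEq ι]

instance : BorelSpace (Matrix ι ι ℝ) := inferInstanceAs (BorelSpace (ι → ι → ℝ))

instance : SecondCountableTopology (Matrix ι ι ℝ) :=
  inferInstanceAs (SecondCountableTopology (ι → ι → ℝ))

instance : BorelSpace (Matrix.orthogonalGroup ι ℝ) := Subtype.borelSpace _

instance : CompactSpace (Matrix.orthogonalGroup ι ℝ) := by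
  refine isCompact_iff_compactSpace.mp (IsCompact.of_isClosed_subset
    (isCompact_univ_pi fun _ => isCompact_univ_pi fun _ => isCompact_Icc (a := -1) (b := 1))
    isClosed_unitary fun O hO i _ j _ => ?_)
  exact abs_le.mp (entry_norm_bound_of_unitary hO i j)

instance : ContinuousSMul (Matrix.orthogonalGroup ι ℝ) (ι → ℝ) :=
  ⟨(continuous_subtype_val.comp continuous_fst).matrix_mulVec continuous_snd⟩

instance : SMulInvariantMeasure (Matrix.orthogonalGroup ι ℝ) (ι → ℝ) volume := by
  refine ⟨fun O s _ => ?_⟩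
  have hdet : |(O : Matrix ι ι ℝ).det| = 1 := by
    have h : (O : Matrix ι ι ℝ).det ∈ unitary ℝ := Matrix.det_of_mem_unitary O.2
    rw [← Real.norm_eq_abs]
    exact CStarRing.norm_of_mem_unitary h
  have := Measure.addHaar_preimage_linearMap volume (f := Matrix.toLin' (O : Matrix ι ι ℝ))
    (by rw [LinearMap.det_toLin']; exact abs_ne_zero.mp (by simp [hdet])) s
  rwa [LinearMap.det_toLin', abs_inv, hdet, inv_one, ENNReal.ofReal_one, one_mul] at this

variable {ι}

lemma smulInvariantMeasure_of_map_mulVec_eq {μ : Measure (ι → ℝ)}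
    (h : ∀ O : Matrix.orthogonalGroup ι ℝ, μ.map (fun x => (O : Matrix ι ι ℝ) *ᵥ x) = μ) :
    SMulInvariantMeasure (Matrix.orthogonalGroup ι ℝ) (ι → ℝ) μ := by
  refine ⟨fun O s hs => ?_⟩
  have hO : Measurable fun x : ι → ℝ => (O : Matrix ι ι ℝ) *ᵥ x :=
    (continuous_const.matrix_mulVec continuous_id).measurable
  calc μ ((O • ·) ⁻¹' s) = μ.map (fun x => (O : Matrix ι ι ℝ) *ᵥ x) s :=
        (Measure.map_apply hO hs).symm
    _ = μ s := by rw [h O]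

end OrthogonalGroupMeasure

section Ellipsoid

variable {ι : Type*} [Fintype ι]

def ellipsoid (b : ι → ℝ) : Set (ι → ℝ) := {y | ∑ i, (y i / b i) ^ 2 ≤ 1}

lemma measurableSet_ellipsoid (b : ι → ℝ) : MeasurableSet (ellipsoid b) :=
  measurableSet_le (by fun_prop) measurable_const

lemma smul_mem_ellipsoid {b y : ι → ℝ} (hy : y ∈ ellipsoid b) {t : ℝ} (ht : |t| ≤ 1) :
    t • y ∈ ellipsoid b := by
  have ht2 : t ^ 2 ≤ 1 := by nlinarith [sq_abs t, abs_nonneg t]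
  calc ∑ i, ((t • y) i / b i) ^ 2 = t ^ 2 * ∑ i, (y i / b i) ^ 2 := by
        rw [Finset.mul_sum]; congr 1; ext i; simp only [Pi.smul_apply, smul_eq_mul]; ring
    _ ≤ 1 := by nlinarith [show (0 : ℝ) ≤ ∑ i, (y i / b i) ^ 2 by positivity, hy.out]

lemma ellipsoid_const {r : ℝ} (hr : 0 < r) :
    ellipsoid (fun _ : ι => r) = {y | euclNorm y ≤ r} := by
  ext y
  simp only [ellipsoid, mem_ofPred_eq, div_pow, ← Finset.sum_div,
    div_le_one (pow_pos hr 2), euclNorm, Real.sqrt_le_left hr.le]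

lemma volume_ellipsoid [DecidableEq ι] {b : ι → ℝ} (hb : ∀ i, 0 < b i) :
    volume (ellipsoid b) = ENNReal.ofReal (∏ i, b i) * volume (ellipsoid (1 : ι → ℝ)) := by
  have hpre : ellipsoid b = Matrix.toLin' (Matrix.diagonal b⁻¹) ⁻¹' ellipsoid 1 := by
    ext y
    simp [ellipsoid, Matrix.mulVec_diagonal, div_eq_inv_mul]
  have hdet : LinearMap.det (Matrix.toLin' (Matrix.diagonal b⁻¹)) = (∏ i, b i)⁻¹ := by
    simp [LinearMap.det_toLin', Finset.prod_inv_distrib]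
  rw [hpre, Measure.addHaar_preimage_linearMap _
      (by simp [hdet, Finset.prod_ne_zero_iff, (hb _).ne']),
    hdet, inv_inv, abs_of_pos (Finset.prod_pos fun i _ => hb i)]

lemma volume_ellipsoid_one_pos : 0 < volume (ellipsoid (1 : ι → ℝ)) := by
  refine lt_of_lt_of_le ?_ (measure_mono (s := {y | ∑ i, y i ^ 2 < 1}) fun y hy => ?_)
  · exact (isOpen_lt (by fun_prop) continuous_const).measure_pos _ ⟨0, by simp⟩
  · simpa [ellipsoid] using hy.out.le

lemma volume_ellipsoid_one_lt_top : volume (ellipsoid (1 : ι → ℝ)) < ⊤ := by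
  refine lt_of_le_of_lt (measure_mono fun y hy => ?_) (measure_closedBall_lt_top (x := 0) (r := 1))
  rw [mem_closedBall_zero_iff, pi_norm_le_iff_of_nonneg zero_le_one]
  intro i
  have : y i ^ 2 ≤ 1 := le_trans (Finset.single_le_sum (fun j _ => sq_nonneg (y j))
    (Finset.mem_univ i)) (by simpa [ellipsoid] using hy)
  rw [Real.norm_eq_abs, ← sq_le_one_iff₀ (abs_nonneg _), sq_abs]
  exact this

lemma mem_ellipsoid_of_sum_mul_sq_lt {r β c u v : ℝ} {d : ι → ℝ} (hv : 0 ≤ v)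
    (hw : ∀ i, 0 < u + v * d i) (hc0 : 0 < c) (hc : u * r ^ 2 + v * β ≤ c) {x : ι → ℝ}
    (hx : euclNorm x = r) (hxd : ∑ i, d i * x i ^ 2 < β) :
    x ∈ ellipsoid fun i => √(c / (u + v * d i)) := by
  have hx2 : ∑ i, x i ^ 2 = r ^ 2 := (euclNorm_eq_iff (hx ▸ Real.sqrt_nonneg _)).mp hx
  calc ∑ i, (x i / √(c / (u + v * d i))) ^ 2
      = (u * ∑ i, x i ^ 2 + v * ∑ i, d i * x i ^ 2) / c := by
        rw [Finset.mul_sum, Finset.mul_sum, ← Finset.sum_add_distrib, Finset.sum_div]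
        refine Finset.sum_congr rfl fun i _ => ?_
        rw [div_pow, Real.sq_sqrt (div_nonneg hc0.le (hw i).le)]
        field_simp [(hw i).ne']
    _ ≤ 1 := by
        rw [div_le_one hc0, hx2]
        nlinarith

end Ellipsoid

section RadialCone

variable {ι : Type*} [Fintype ι]

def radialCone (r : ℝ) (S : Set (ι → ℝ)) : Set (ι → ℝ) :=
  {y | 0 < euclNorm y ∧ euclNorm y ≤ r ∧ (r / euclNorm y) • y ∈ S}

lemma measurableSet_radialCone (r : ℝ) {S : Set (ι → ℝ)} (hS : MeasurableSet S) :
    MeasurableSet (radialCone r S) := by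
  have h := continuous_euclNorm (ι := ι)
  refine (measurableSet_lt measurable_const h.measurable).inter
    ((measurableSet_le h.measurable measurable_const).inter ?_)
  exact ((measurable_const.div h.measurable).smul measurable_id) hS

lemma radialCone_subset_ellipsoid {r : ℝ} (hr : 0 < r) {S : Set (ι → ℝ)} {b : ι → ℝ}
    (hS : S ⊆ ellipsoid b) : radialCone r S ⊆ ellipsoid b := by
  rintro y ⟨hy0, hyr, hyS⟩
  have hy : y = (euclNorm y / r) • (r / euclNorm y) • y := by
    rw [smul_smul, div_mul_div_cancel₀ hr.ne', div_self hy0.ne', one_smul]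
  rw [hy]
  refine smul_mem_ellipsoid (hS hyS) ?_
  rw [abs_of_nonneg (by positivity)]
  exact div_le_one_of_le₀ hyr hr.le

lemma orthogonalGroup_smul_mem_radialCone [DecidableEq ι] {r : ℝ} {S : Set (ι → ℝ)}
    (O : Matrix.orthogonalGroup ι ℝ) (y : ι → ℝ) :
    O • y ∈ radialCone r S ↔
      0 < euclNorm y ∧ euclNorm y ≤ r ∧ O • (r / euclNorm y) • y ∈ S := by
  rw [Matrix.orthogonalGroup.smul_def (x := (r / euclNorm y) • y), Matrix.mulVec_smul,
    ← Matrix.orthogonalGroup.smul_def]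
  simp only [radialCone, mem_ofPred_eq, euclNorm_orthogonalGroup_smul]

end RadialCone

section SphereMeasure

variable {ι : Type*} [Fintype ι] [DecidableEq ι] [Nonempty ι] {r : ℝ} (hr : 0 < r)
  (μ : Measure (ι → ℝ)) [IsProbabilityMeasure μ]
  [SMulInvariantMeasure (Matrix.orthogonalGroup ι ℝ) (ι → ℝ) μ] (hμ : ∀ᵐ x ∂μ, euclNorm x = r)
include hr hμ

/-- With `ρ` the Haar measure of `O(n)`, Fubini turns both sides times `ρ univ` into integrals
of `x ↦ ρ {g | g⁻¹ • x ∈ ·}`, which takes one value on the sphere and on the radial cone. -/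
theorem measure_mul_volume_eq_volume_radialCone {S : Set (ι → ℝ)} (hS : MeasurableSet S) :
    μ S * volume {y : ι → ℝ | euclNorm y ≤ r} = volume (radialCone r S) := by
  let ρ : Measure (Matrix.orthogonalGroup ι ℝ) := Measure.haar
  have horbit {x y : ι → ℝ} (h : euclNorm x = euclNorm y) :
      ρ {g | g⁻¹ • x ∈ S} = ρ {g | g⁻¹ • y ∈ S} := by
    obtain ⟨O, rfl⟩ := exists_orthogonalGroup_smul_eq h
    exact (measure_inv_smul_mem_smul ρ S O x).symm
  obtain ⟨i₀⟩ := ‹Nonempty ι›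
  set c := ρ {g | g⁻¹ • Pi.single i₀ r ∈ S}
  have hc {x : ι → ℝ} (hx : euclNorm x = r) : ρ {g | g⁻¹ • x ∈ S} = c :=
    horbit (hx.trans ((euclNorm_eq_iff hr.le).mpr (by simp [sq, Pi.single_apply])).symm)
  have hμS : ρ univ * μ S = c := by
    rw [← lintegral_measure_inv_smul_mem ρ μ hS, lintegral_congr_ae (hμ.mono fun x hx => hc hx),
      lintegral_const, measure_univ, mul_one]
  set B := {y : ι → ℝ | 0 < euclNorm y ∧ euclNorm y ≤ r}
  have hB : B = {y | euclNorm y ≤ r} \ {0} := by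
    ext y
    simp [B, euclNorm_pos_iff, and_comm]
  have hcone (y : ι → ℝ) : ρ {g | g⁻¹ • y ∈ radialCone r S} = B.indicator (fun _ => c) y := by
    simp_rw [orthogonalGroup_smul_mem_radialCone]
    by_cases hy : y ∈ B
    · rw [indicator_of_mem hy]
      simp only [hy.1, hy.2, true_and]
      exact hc (by rw [euclNorm_smul, abs_of_pos (div_pos hr hy.1), div_mul_cancel₀ _ hy.1.ne'])
    · rw [indicator_of_notMem hy]
      convert measure_empty (μ := ρ)
      exact eq_empty_of_forall_notMem fun g hg => hy ⟨hg.1, hg.2.1⟩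
  have hvol : ρ univ * volume (radialCone r S) = c * volume {y : ι → ℝ | euclNorm y ≤ r} := by
    have hBmeas : MeasurableSet B := hB ▸
      (measurableSet_le continuous_euclNorm.measurable measurable_const).diff
        (measurableSet_singleton 0)
    rw [← lintegral_measure_inv_smul_mem ρ volume (measurableSet_radialCone r hS),
      lintegral_congr hcone, lintegral_indicator_const hBmeas, hB,
      measure_sdiff_null (measure_singleton 0)]
  have hρ : ρ univ ≠ 0 := isOpen_univ.measure_ne_zero ρ univ_nonempty
  apply (ENNReal.mul_right_inj hρ (measure_ne_top ρ univ)).mp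
  rw [← mul_assoc, hμS, hvol]

theorem measure_le_of_sphere_inter_subset_ellipsoid {T : Set (ι → ℝ)} {b : ι → ℝ}
    (hb : ∀ i, 0 < b i) (hT : ∀ x ∈ T, euclNorm x = r → x ∈ ellipsoid b) :
    μ T ≤ ENNReal.ofReal ((∏ i, b i) / r ^ Fintype.card ι) := by
  set S := {x : ι → ℝ | euclNorm x = r} ∩ ellipsoid b
  have hS : MeasurableSet S :=
    (continuous_euclNorm.measurable (measurableSet_singleton r)).inter (measurableSet_ellipsoid b)
  have hTS : μ T ≤ μ S := measure_mono_ae (hμ.mono fun x hx hxT => ⟨hx, hT x hxT hx⟩)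
  have hSb : μ S * ENNReal.ofReal (r ^ Fintype.card ι) ≤ ENNReal.ofReal (∏ i, b i) := by
    have hvol := measure_mul_volume_eq_volume_radialCone hr μ hμ hS
    rw [← ellipsoid_const hr, volume_ellipsoid fun _ => hr, Finset.prod_const,
      Finset.card_univ, ← mul_assoc] at hvol
    rw [← ENNReal.mul_le_mul_iff_left (volume_ellipsoid_one_pos (ι := ι)).ne'
      (volume_ellipsoid_one_lt_top (ι := ι)).ne, hvol, ← volume_ellipsoid hb]
    exact measure_mono (radialCone_subset_ellipsoid hr inter_subset_right)
  rw [ENNReal.ofReal_div_of_pos (pow_pos hr _)]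
  exact hTS.trans (ENNReal.le_div_iff_mul_le (by simp [hr]) (by simp) |>.mpr hSb)

theorem measure_sum_mul_sq_lt_le {β c u v : ℝ} {d : ι → ℝ} (hv : 0 ≤ v)
    (hw : ∀ i, 0 < u + v * d i) (hc0 : 0 < c) (hc : u * r ^ 2 + v * β ≤ c) :
    μ {x | ∑ i, d i * x i ^ 2 < β}
      ≤ ENNReal.ofReal ((∏ i, √(c / (u + v * d i))) / r ^ Fintype.card ι) :=
  measure_le_of_sphere_inter_subset_ellipsoid hr μ hμ
    (fun i => Real.sqrt_pos.mpr (div_pos hc0 (hw i)))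
    fun _ hxd hx => mem_ellipsoid_of_sum_mul_sq_lt hv hw hc0 hc hx hxd

end SphereMeasure

lemma prod_sqrt_eq_prod_inl_of_paired {κ : Type*} [Fintype κ] {f : κ ⊕ κ → ℝ}
    (hf : ∀ j, f (.inl j) = f (.inr j)) (hf0 : ∀ i, 0 ≤ f i) :
    ∏ i, √(f i) = ∏ j, f (.inl j) := by
  rw [Fintype.prod_sum_type, ← Finset.prod_mul_distrib]
  refine Finset.prod_congr rfl fun j _ => ?_
  rw [← hf, Real.mul_self_sqrt (hf0 _)]

lemma two_mul_rpow_sub_half_div_eq (m : ℕ) {β : ℝ} (hβ : 0 < β) (r P : ℝ) {δ : ℝ} (hδ : 0 < δ) :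
    (2 * ((m + 1 : ℕ) : ℝ) * β ^ (((m + 1 : ℕ) : ℝ) - 1 / 2)) /
        (r ^ (2 * (m + 1) - 1) * P * (2 / √δ))
      = ((m : ℝ) + 1) * β ^ (m + 1) * √δ / (√β * r ^ (2 * m + 1) * P) := by
  rw [Real.rpow_sub hβ, Real.rpow_natCast, ← Real.sqrt_eq_rpow,
    show 2 * (m + 1) - 1 = 2 * m + 1 by omega]
  field_simp
  push_cast
  ring

lemma add_one_pow_le_add_one_mul_pow (m : ℕ) : ((m : ℝ) + 1) ^ m ≤ (m + 1) * m ^ m := by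
  rcases Nat.lt_or_ge m 2 with hm | hm
  · interval_cases m <;> norm_num
  have hm' : (2 : ℝ) ≤ m := by exact_mod_cast hm
  have he : (1 + (m : ℝ)⁻¹) ^ m ≤ m + 1 :=
    Real.one_add_inv_pow_le_exp.trans (by linarith [Real.exp_one_lt_d9])
  calc ((m : ℝ) + 1) ^ m = (1 + (m : ℝ)⁻¹) ^ m * m ^ m := by
        rw [← mul_pow]; congr 1; field_simp
    _ ≤ (m + 1) * m ^ m := by gcongr

lemma mul_prod_le_prod_add {κ : Type*} [Fintype κ] [DecidableEq κ] {m : ℕ}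
    (hκ : Fintype.card κ = m + 1) {d : κ → ℝ} (hd : ∀ j, 0 < d j) (a : κ) {β r : ℝ}
    (hr : 0 < r) (hβ : ((m : ℝ) + 1) ^ 2 * d a * r ^ 2 ≤ β) :
    ((m : ℝ) + 1) ^ m * √β * r ^ (2 * m + 1) * ∏ j, d j
      ≤ √(d a) * ∏ j, (β + m * r ^ 2 * d j) := by
  set D := ∏ j ∈ Finset.univ.erase a, d j
  have hD : 0 ≤ D := Finset.prod_nonneg fun j _ => (hd j).le
  have hda := hd a
  have hβ0 : 0 ≤ β := le_trans (by positivity) hβ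
  have hK (j : κ) : 0 ≤ m * r ^ 2 * d j := by have := hd j; positivity
  have hcard : (Finset.univ.erase a).card = m := by simp [Finset.card_erase_of_mem, hκ]
  -- the factor of `a` absorbs `(m + 1) r √β`, every other factor is at least `m r² d j`
  have hfac : ((m : ℝ) + 1) * r * √β * d a ≤ √(d a) * (β + m * r ^ 2 * d a) := by
    have hsq : ((m : ℝ) + 1) * r * √(d a) ≤ √β := by
      rw [Real.le_sqrt (by positivity) hβ0, mul_pow, Real.sq_sqrt hda.le]
      linarith
    calc ((m : ℝ) + 1) * r * √β * d a = √(d a) * √β * (((m : ℝ) + 1) * r * √(d a)) := by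
          linear_combination (-((m : ℝ) + 1) * r * √β) * Real.mul_self_sqrt hda.le
      _ ≤ √(d a) * √β * √β := by gcongr
      _ ≤ √(d a) * (β + m * r ^ 2 * d a) := by
          rw [mul_assoc, Real.mul_self_sqrt hβ0]
          gcongr
          linarith [hK a]
  have hrest : ((m : ℝ) * r ^ 2) ^ m * D ≤ ∏ j ∈ Finset.univ.erase a, (β + m * r ^ 2 * d j) := by
    have hconst : ∏ _j ∈ Finset.univ.erase a, ((m : ℝ) * r ^ 2) = ((m : ℝ) * r ^ 2) ^ m := by
      rw [Finset.prod_const, hcard]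
    rw [← hconst, ← Finset.prod_mul_distrib]
    exact Finset.prod_le_prod (fun j _ => hK j) fun j _ => by linarith
  rw [← Finset.mul_prod_erase _ _ (Finset.mem_univ a),
    ← Finset.mul_prod_erase _ _ (Finset.mem_univ a)]
  calc ((m : ℝ) + 1) ^ m * √β * r ^ (2 * m + 1) * (d a * D)
      ≤ ((m : ℝ) + 1) * m ^ m * √β * r ^ (2 * m + 1) * (d a * D) := by
        gcongr
        exact add_one_pow_le_add_one_mul_pow m
    _ = (((m : ℝ) + 1) * r * √β * d a) * (((m : ℝ) * r ^ 2) ^ m * D) := by ring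
    _ ≤ (√(d a) * (β + m * r ^ 2 * d a)) * ∏ j ∈ Finset.univ.erase a, (β + m * r ^ 2 * d j) :=
        mul_le_mul hfac hrest (by positivity) (mul_nonneg (Real.sqrt_nonneg _) (by linarith [hK a]))
    _ = _ := by ring

lemma prod_div_div_pow_le_of_le {κ : Type*} [Fintype κ] {m : ℕ} (hκ : Fintype.card κ = m + 1)
    {d : κ → ℝ} (hd : ∀ j, 0 < d j) (a : κ) {β r : ℝ} (hβ : 0 < β) (hr : 0 < r)
    (hsmall : β ≤ ((m : ℝ) + 1) ^ 2 * d a * r ^ 2) :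
    (∏ j, β / d j) / r ^ (2 * m + 2)
      ≤ ((m : ℝ) + 1) * β ^ (m + 1) * √(d a) / (√β * r ^ (2 * m + 1) * ∏ j, d j) := by
  have hsq : √β ≤ ((m : ℝ) + 1) * r * √(d a) := by
    rw [Real.sqrt_le_left (by positivity), mul_pow, Real.sq_sqrt (hd a).le]
    linarith
  have hD : 0 < ∏ j, d j := Finset.prod_pos fun j _ => hd j
  rw [Finset.prod_div_distrib, Finset.prod_const, Finset.card_univ, hκ,
    div_div, div_le_div_iff₀ (by positivity) (by positivity)]
  calc β ^ (m + 1) * (√β * r ^ (2 * m + 1) * ∏ j, d j)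
      ≤ β ^ (m + 1) * ((((m : ℝ) + 1) * r * √(d a)) * r ^ (2 * m + 1) * ∏ j, d j) := by gcongr
    _ = ((m : ℝ) + 1) * β ^ (m + 1) * √(d a) * ((∏ j, d j) * r ^ (2 * m + 2)) := by ring

lemma prod_div_div_pow_le_of_ge {κ : Type*} [Fintype κ] [DecidableEq κ] {m : ℕ}
    (hκ : Fintype.card κ = m + 1) {d : κ → ℝ} (hd : ∀ j, 0 < d j) (a : κ) {β r : ℝ}
    (hβ : 0 < β) (hr : 0 < r) (hlarge : ((m : ℝ) + 1) ^ 2 * d a * r ^ 2 ≤ β) :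
    (∏ j, ((m : ℝ) + 1) * r ^ 2 * β / (β + m * r ^ 2 * d j)) / r ^ (2 * m + 2)
      ≤ ((m : ℝ) + 1) * β ^ (m + 1) * √(d a) / (√β * r ^ (2 * m + 1) * ∏ j, d j) := by
  have hK : 0 < ∏ j, (β + m * r ^ 2 * d j) :=
    Finset.prod_pos fun j _ => by have := hd j; positivity
  have hD : 0 < ∏ j, d j := Finset.prod_pos fun j _ => hd j
  have key := mul_prod_le_prod_add hκ hd a hr hlarge
  rw [Finset.prod_div_distrib, Finset.prod_const, Finset.card_univ, hκ,
    div_div, div_le_div_iff₀ (by positivity) (by positivity)]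
  calc (((m : ℝ) + 1) * r ^ 2 * β) ^ (m + 1) * (√β * r ^ (2 * m + 1) * ∏ j, d j)
      = ((m : ℝ) + 1) * β ^ (m + 1) * r ^ (2 * m + 2)
          * (((m : ℝ) + 1) ^ m * √β * r ^ (2 * m + 1) * ∏ j, d j) := by
        rw [mul_pow, mul_pow, ← pow_mul]; ring
    _ ≤ ((m : ℝ) + 1) * β ^ (m + 1) * r ^ (2 * m + 2)
          * (√(d a) * ∏ j, (β + m * r ^ 2 * d j)) := by
        gcongr
    _ = _ := by ring

theorem statement_9_general (N : ℕ)
    (d : Fin N ⊕ Fin N → ℝ) (hd : ∀ i, 0 < d i)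
    (hpair : ∀ i : Fin N, d (Sum.inl i) = d (Sum.inr i))
    (dmin : ℝ) (hdmin : IsLeast (Set.range d) dmin)
    (r : ℝ) (hr : 0 < r)
    (μ : Measure (Fin N ⊕ Fin N → ℝ)) [IsProbabilityMeasure μ]
    (hsupp : μ {x | euclNorm x ≠ r} = 0)
    (hinv : ∀ O : Matrix.orthogonalGroup (Fin N ⊕ Fin N) ℝ,
      Measure.map (fun x => (O : Matrix (Fin N ⊕ Fin N) (Fin N ⊕ Fin N) ℝ) *ᵥ x) μ = μ) :
    ∀ β : ℝ, 0 < β →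
      μ {x | euclNorm (fun i => Real.sqrt (d i) * x i) < Real.sqrt β}
        ≤ ENNReal.ofReal ((2 * N * β ^ ((N : ℝ) - 1 / 2)) /
            (r ^ (2 * N - 1) * (∏ i, Real.sqrt (d i)) * (2 / Real.sqrt dmin))) := by
  intro β hβ
  obtain ⟨a, rfl⟩ : ∃ a, d (.inl a) = dmin := by
    obtain ⟨j | j, hj⟩ := hdmin.1
    exacts [⟨j, hj⟩, ⟨j, (hpair j).trans hj⟩]
  obtain ⟨m, rfl⟩ := Nat.exists_eq_add_one_of_ne_zero (Fin.pos a).ne'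
  have : Nonempty (Fin (m + 1) ⊕ Fin (m + 1)) := ⟨.inl a⟩
  have := smulInvariantMeasure_of_map_mulVec_eq hinv
  have hμ : ∀ᵐ x ∂μ, euclNorm x = r := ae_iff.mpr hsupp
  have hcard : Fintype.card (Fin (m + 1) ⊕ Fin (m + 1)) = 2 * m + 2 := by simp; ring
  simp only [euclNorm_sqrt_mul_lt_sqrt_iff fun i => (hd i).le]
  rw [two_mul_rpow_sub_half_div_eq m hβ _ _ (hd _),
    prod_sqrt_eq_prod_inl_of_paired hpair fun i => (hd i).le]
  rcases le_or_gt β (((m : ℝ) + 1) ^ 2 * d (.inl a) * r ^ 2) with hsmall | hlarge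
  · refine (measure_sum_mul_sq_lt_le hr μ hμ (u := 0) zero_le_one (by simpa using hd) hβ
      (by simp)).trans (ENNReal.ofReal_le_ofReal ?_)
    rw [prod_sqrt_eq_prod_inl_of_paired (by simp [hpair]) fun i => by have := hd i; positivity,
      hcard]
    simpa using prod_div_div_pow_le_of_le (by simp) (fun j => hd (.inl j)) a hβ hr hsmall
  · refine (measure_sum_mul_sq_lt_le hr μ hμ (u := β) (v := m * r ^ 2) (c := (m + 1) * r ^ 2 * β)
      (by positivity) (fun i => by have := hd i; positivity) (by positivity)
      (le_of_eq (by ring))).trans (ENNReal.ofReal_le_ofReal ?_)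
    rw [prod_sqrt_eq_prod_inl_of_paired (by simp [hpair]) fun i => by have := hd i; positivity,
      hcard]
    simpa using prod_div_div_pow_le_of_ge (by simp) (fun j => hd (.inl j)) a hβ hr hlarge.le

/-- if `o` is uniformly distributed (i.e. its law is the
rotation-invariant probability measure) on the sphere of radius `r` in `ℝ^{2N}`,
and `D = diag d` with positive paired diagonal entries, then for every `β > 0`,
`P(‖D^{1/2} o‖ < √β) ≤ (2N β^{N−1/2}) / (r^{2N−1} (∏ √dᵢ) (2/√d_min))`. -/
theorem statement_9 (N : ℕ) (hN : 1 ≤ N)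
    (d : Fin N ⊕ Fin N → ℝ) (hd : ∀ i, 0 < d i)
    (hpair : ∀ i : Fin N, d (Sum.inl i) = d (Sum.inr i))
    (dmin : ℝ) (hdmin : IsLeast (Set.range d) dmin)
    (r : ℝ) (hr : 0 < r)
    (μ : Measure (Fin N ⊕ Fin N → ℝ)) [IsProbabilityMeasure μ]
    (hsupp : μ {x | euclNorm x ≠ r} = 0)
    (hinv : ∀ O : Matrix.orthogonalGroup (Fin N ⊕ Fin N) ℝ,
      Measure.map (fun x => (O : Matrix (Fin N ⊕ Fin N) (Fin N ⊕ Fin N) ℝ) *ᵥ x) μ = μ) :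
    ∀ β : ℝ, 0 < β →
      μ {x | euclNorm (fun i => Real.sqrt (d i) * x i) < Real.sqrt β}
        ≤ ENNReal.ofReal ((2 * N * β ^ ((N : ℝ) - 1 / 2)) /
            (r ^ (2 * N - 1) * (∏ i, Real.sqrt (d i)) * (2 / Real.sqrt dmin))) :=
  statement_9_general N d hd hpair dmin hdmin r hr μ hsupp hinv

end
end

section
/- Let N ≥ 1 be an integer and let k be a real number with k ≥ 1. Then (k + 1 + √(2N)/2)^{2N} − (k − √(2N)/2)^{2N} ≤ [(2 + √(2N)/2)^{2N} − (1 − √(2N)/2)^{2N}] · k^{2N−1}. -/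
/-- for an integer `N ≥ 1` and a real `k ≥ 1`, one has
`(k + 1 + √(2N)/2)^{2N} − (k − √(2N)/2)^{2N}
  ≤ [(2 + √(2N)/2)^{2N} − (1 − √(2N)/2)^{2N}] · k^{2N−1}`. -/
theorem statement_12 (N : ℕ) (hN : 1 ≤ N) (k : ℝ) (hk : 1 ≤ k) :
    (k + 1 + Real.sqrt (2 * N) / 2) ^ (2 * N) - (k - Real.sqrt (2 * N) / 2) ^ (2 * N)
      ≤ ((2 + Real.sqrt (2 * N) / 2) ^ (2 * N) - (1 - Real.sqrt (2 * N) / 2) ^ (2 * N)) *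
          k ^ (2 * N - 1) := by
  set s := Real.sqrt (2 * N) / 2 with hs
  have hs0 : 0 ≤ s := by positivity
  set n := 2 * N with hn
  have h1 : k + 1 + s = (1 + s) + k := by ring
  have h2 : k - s = (-s) + k := by ring
  have h3 : (2:ℝ) + s = (1 + s) + 1 := by ring
  have h4 : (1:ℝ) - s = (-s) + 1 := by ring
  rw [h1, h2, h3, h4, add_pow, add_pow, add_pow, add_pow,
    ← Finset.sum_sub_distrib, ← Finset.sum_sub_distrib, Finset.sum_mul]
  apply Finset.sum_le_sum
  intro i hi
  rcases Nat.eq_zero_or_pos i with h0 | h0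
  · subst h0; simp
  · have hai : (0:ℝ) ≤ (1 + s) ^ i - (-s) ^ i := by
      have : (-s) ^ i ≤ (1 + s) ^ i := by
        calc (-s) ^ i ≤ |(-s) ^ i| := le_abs_self _
          _ = s ^ i := by rw [abs_pow, abs_neg, abs_of_nonneg hs0]
          _ ≤ (1 + s) ^ i := pow_le_pow_left₀ hs0 (by linarith) i
      linarith
    have hk1 : k ^ (n - i) ≤ k ^ (n - 1) := pow_le_pow_right₀ hk (by omega)
    have hC : (0:ℝ) ≤ (Nat.choose n i : ℝ) := Nat.cast_nonneg _
    have := mul_le_mul_of_nonneg_left hk1 (mul_nonneg hai hC)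
    simp only [one_pow, mul_one]
    nlinarith [this]
end
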